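/- Let X_1,...,X_n, X_{n+1} be exchangeable real-valued random variables (the non-conformity scores), and let q̂ be the ⌈(n+1)(1−δ)⌉-th smallest value among X_1,...,X_n, where δ ∈ (0,1) and ⌈(n+1)(1−δ)⌉ ≤ n. Then P(X_{n+1} ≤ q̂) ≥ 1 − δ. -/

import Mathlib

/-!
Call the rank of `X j` the number of scores strictly below it. Pointwise, at least `k` of the
`n + 1` ranks are `< k`, and by exchangeability every rank has the same law; hence
`P(rank of X_{n+1} < k) ≥ k / (n + 1) ≥ 1 - δ`. Finally, if fewer than `k` of `X_1, …, X_n` lie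
strictly below `X_{n+1}`, then `X_{n+1}` is at most their `k`-th smallest value.
-/

open MeasureTheory Finset
open scoped ENNReal

namespace Conformal

def rank {ι α : Type*} [Fintype ι] [LinearOrder α] (x : ι → α) (j : ι) : ℕ := #{i | x i < x j}

section Rank

variable {ι α : Type*} [Fintype ι] [LinearOrder α]

theorem rank_comp_perm (x : ι → α) (σ : Equiv.Perm ι) (j : ι) :
    rank (x ∘ σ) j = rank x (σ j) := by
  simp only [rank, card_filter, Function.comp_apply]
  exact Equiv.sum_comp σ (fun i => if x i < x (σ j) then 1 else 0)

theorem rank_last {n : ℕ} (x : Fin (n + 1) → α) :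
    rank x (Fin.last n) = #{i : Fin n | x i.castSucc < x (Fin.last n)} := by
  simp only [rank, card_filter, Fin.sum_univ_castSucc, lt_irrefl, if_false, add_zero]

/-- Among the indices whose value is not of rank `< k`, one of minimal value has all the smaller
values below it, so it has at least `k` of them. -/
theorem le_card_rank_lt (x : ι → α) {k : ℕ} (hk : k ≤ Fintype.card ι) :
    k ≤ #{j | rank x j < k} := by
  by_cases hall : ∀ j, rank x j < k
  · simpa [hall] using hk
  simp only [not_forall, not_lt] at hall
  obtain ⟨j₀, hj₀, hmin⟩ := exists_min_image {j | k ≤ rank x j} x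
    (by simpa [Finset.Nonempty] using hall)
  simp only [mem_filter, mem_univ, true_and] at hj₀ hmin
  calc k ≤ rank x j₀ := hj₀
    _ ≤ #{j | rank x j < k} := card_le_card fun i hi => by
      simp only [mem_filter, mem_univ, true_and] at hi ⊢
      by_contra! h
      exact (hmin i h).not_gt hi

end Rank

theorem _root_.List.SortedLE.le_getElem_of_countP_le {α : Type*} [LinearOrder α] {l : List α}
    (hl : l.SortedLE) {t : α} {i : ℕ} (hi : i < l.length) (hc : l.countP (· < t) ≤ i) :
    t ≤ l[i] := by
  by_contra! h
  have hprefix : ∀ a ∈ l.take (i + 1), a < t := by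
    intro a ha
    obtain ⟨m, hm, rfl⟩ := List.mem_take_iff_getElem.mp ha
    exact (hl.getElem_le_getElem_of_le (by omega)).trans_lt h
  have := (l.take_sublist (i + 1)).countP_le (p := (· < t))
  rw [List.countP_eq_length.mpr (by simpa using hprefix), List.length_take] at this
  omega

theorem _root_.List.countP_ofFn {α : Type*} {n : ℕ} (f : Fin n → α) (p : α → Bool) :
    (List.ofFn f).countP p = #{i | p (f i)} := by
  simp [List.ofFn_eq_map, Fin.univ_def, Finset.filter, List.countP_eq_length_filter,
    List.filter_map, Function.comp_def]

theorem le_getD_insertionSort_of_card_lt {α : Type*} [LinearOrder α] {n k : ℕ} (hkn : k ≤ n)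
    (x : Fin n → α) (d t : α) (h : #{i | x i < t} < k) :
    t ≤ ((List.ofFn x).insertionSort (· ≤ ·)).getD (k - 1) d := by
  set l := (List.ofFn x).insertionSort (· ≤ ·)
  have hperm : l.Perm (List.ofFn x) := List.perm_insertionSort _ _
  have hlen : k - 1 < l.length := by
    rw [hperm.length_eq, List.length_ofFn]; omega
  rw [List.getD_eq_getElem _ _ hlen]
  refine List.sortedLE_insertionSort.le_getElem_of_countP_le hlen ?_
  rw [hperm.countP_eq, List.countP_ofFn]
  simp only [decide_eq_true_eq]
  omega

def Exchangeable {Ω ι β : Type*} [MeasurableSpace Ω] [MeasurableSpace β] (μ : Measure Ω)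
    (X : ι → Ω → β) : Prop :=
  ∀ σ : Equiv.Perm ι, μ.map (fun ω i => X (σ i) ω) = μ.map (fun ω i => X i ω)

theorem card_mul_le_sum_measure {Ω ι : Type*} [MeasurableSpace Ω] [Fintype ι] (μ : Measure Ω)
    {A : ι → Set Ω} [∀ ω j, Decidable (ω ∈ A j)] (hA : ∀ j, MeasurableSet (A j)) {k : ℕ}
    (hk : ∀ ω, k ≤ #{j | ω ∈ A j}) :
    k * μ Set.univ ≤ ∑ j, μ (A j) := by
  calc k * μ Set.univ = ∫⁻ _, (k : ℝ≥0∞) ∂μ := (lintegral_const _).symm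
    _ ≤ ∫⁻ ω, ∑ j, (A j).indicator 1 ω ∂μ := lintegral_mono fun ω => by
      simpa [Set.indicator_apply] using hk ω
    _ = ∑ j, μ (A j) := by
      rw [lintegral_finsetSum _ fun j _ => measurable_one.indicator (hA j)]
      simp only [lintegral_indicator_one (hA _)]

section Exchangeable

variable {Ω ι β : Type*} [MeasurableSpace Ω] [Fintype ι] [LinearOrder β] [MeasurableSpace β]
  [TopologicalSpace β] [OrderClosedTopology β] [SecondCountableTopology β] [OpensMeasurableSpace β]

theorem measurable_rank (j : ι) : Measurable fun x : ι → β => rank x j := by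
  simp only [rank, card_filter]
  exact Finset.measurable_sum _ fun i _ => Measurable.ite
    (measurableSet_lt (measurable_pi_apply i) (measurable_pi_apply j)) measurable_const
    measurable_const

theorem Exchangeable.measure_rank_lt_eq {μ : Measure Ω} {X : ι → Ω → β} (hexch : Exchangeable μ X)
    (hX : ∀ i, Measurable (X i)) (k : ℕ) (j j' : ι) :
    μ {ω | rank (X · ω) j < k} = μ {ω | rank (X · ω) j' < k} := by
  classical
  have hS : MeasurableSet {x : ι → β | rank x j' < k} := measurable_rank j' measurableSet_Iio
  have hpre : {ω | rank (X · ω) j < k}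
      = (fun ω i => X (Equiv.swap j j' i) ω) ⁻¹' {x | rank x j' < k} := by
    ext ω
    change rank (X · ω) j < k ↔ rank ((X · ω) ∘ Equiv.swap j j') j' < k
    rw [rank_comp_perm, Equiv.swap_apply_right]
  rw [hpre, ← Measure.map_apply (by fun_prop) hS, hexch, Measure.map_apply (by fun_prop) hS]
  rfl

theorem Exchangeable.le_card_mul_measure_rank_lt {μ : Measure Ω} {X : ι → Ω → β}
    (hexch : Exchangeable μ X) (hX : ∀ i, Measurable (X i)) {k : ℕ} (hk : k ≤ Fintype.card ι)
    (j : ι) : k * μ Set.univ ≤ Fintype.card ι * μ {ω | rank (X · ω) j < k} := by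
  have hA (j' : ι) : MeasurableSet {ω | rank (X · ω) j' < k} :=
    (measurable_rank j').comp (measurable_pi_lambda _ hX) measurableSet_Iio
  calc k * μ Set.univ ≤ ∑ j', μ {ω | rank (X · ω) j' < k} :=
        card_mul_le_sum_measure μ hA fun ω => le_card_rank_lt (X · ω) hk
    _ = Fintype.card ι * μ {ω | rank (X · ω) j < k} := by
      simp [hexch.measure_rank_lt_eq hX k _ j]

end Exchangeable

end Conformal

open Conformal in
theorem conformal_coverage_guarantee_general
    {Ω : Type*} [MeasurableSpace Ω] (μ : Measure Ω) [IsProbabilityMeasure μ]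
    (n : ℕ) (δ : ℝ)
    (X : Fin (n + 1) → Ω → ℝ) (hX : ∀ i, Measurable (X i))
    (hexch : ∀ σ : Equiv.Perm (Fin (n + 1)),
      Measure.map (fun ω => fun i => X (σ i) ω) μ
        = Measure.map (fun ω => fun i => X i ω) μ)
    (k : ℕ) (hk : k = ⌈((n : ℝ) + 1) * (1 - δ)⌉₊) (hkn : k ≤ n)
    (qhat : Ω → ℝ)
    (hq : ∀ ω, qhat ω =
      (List.insertionSort (· ≤ ·) (List.ofFn fun i : Fin n => X i.castSucc ω)).getD (k - 1) 0) :
    1 - δ ≤ (μ {ω | X (Fin.last n) ω ≤ qhat ω}).toReal := by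
  set E := {ω | rank (X · ω) (Fin.last n) < k}
  have hcover : E ⊆ {ω | X (Fin.last n) ω ≤ qhat ω} := fun ω hω => by
    rw [Set.mem_ofPred_eq, hq]
    exact le_getD_insertionSort_of_card_lt hkn _ _ _ (rank_last (X · ω) ▸ hω)
  have hE : (k : ℝ≥0∞) ≤ (n + 1 : ℕ) * μ E := by
    have hk_card : k ≤ Fintype.card (Fin (n + 1)) := by rw [Fintype.card_fin]; omega
    simpa using Exchangeable.le_card_mul_measure_rank_lt hexch hX hk_card (Fin.last n)
  have hEreal : (k : ℝ) ≤ (n + 1) * (μ E).toReal := by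
    have := ENNReal.toReal_mono (by finiteness) hE
    rwa [ENNReal.toReal_mul, ENNReal.toReal_natCast, ENNReal.toReal_natCast, Nat.cast_succ] at this
  have hmono : (μ E).toReal ≤ (μ {ω | X (Fin.last n) ω ≤ qhat ω}).toReal :=
    ENNReal.toReal_mono (measure_ne_top μ _) (measure_mono hcover)
  have hceil : ((n : ℝ) + 1) * (1 - δ) ≤ k := hk ▸ Nat.le_ceil _
  nlinarith

theorem conformal_coverage_guarantee
    {Ω : Type*} [MeasurableSpace Ω] (μ : Measure Ω) [IsProbabilityMeasure μ]
    (n : ℕ) (hn : 1 ≤ n) (δ : ℝ) (hδ : 0 < δ ∧ δ < 1)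
    (X : Fin (n + 1) → Ω → ℝ) (hX : ∀ i, Measurable (X i))
    (hexch : ∀ σ : Equiv.Perm (Fin (n + 1)),
      Measure.map (fun ω => fun i => X (σ i) ω) μ
        = Measure.map (fun ω => fun i => X i ω) μ)
    (k : ℕ) (hk : k = ⌈((n : ℝ) + 1) * (1 - δ)⌉₊) (hkn : k ≤ n)
    (qhat : Ω → ℝ)
    (hq : ∀ ω, qhat ω =
      (List.insertionSort (· ≤ ·) (List.ofFn fun i : Fin n => X i.castSucc ω)).getD (k - 1) 0) :
    1 - δ ≤ (μ {ω | X (Fin.last n) ω ≤ qhat ω}).toReal :=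
  conformal_coverage_guarantee_general μ n δ X hX hexch k hk hkn qhat hq
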